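/- With R and I as above, stᵐ − t ∈ I for every integer m. -/

import Mathlib

noncomputable section

abbrev R2 : Type := AddMonoidAlgebra ℤ (ℤ × ℤ)

def mono (n m : ℤ) : R2 := AddMonoidAlgebra.single (n, m) 1

def Igen : Set R2 :=
  {x | ∃ n : ℤ, x = mono n n - mono n 0} ∪
  {x | ∃ n m : ℤ, x = mono n m + mono (-n) (m - n)} ∪
  {x | ∃ n m : ℤ, x = mono n m + mono m n} ∪
  {x | ∃ n m : ℤ, x = mono n m * (1 - mono 0 1) ^ 2}

def I : AddSubgroup R2 := AddSubgroup.closure Igen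

abbrev A2 : Type := AddMonoidAlgebra (ZMod 2) (ZMod 2)

def tA (k : ZMod 2) : A2 := AddMonoidAlgebra.single k 1

def Jf (n m : ℤ) : ZMod 2 := ((n + n * m + m : ℤ) : ZMod 2)

def phi : R2 →ₗ[ℤ] A2 :=
  Finsupp.lsum ℤ (fun p : ℤ × ℤ => LinearMap.toSpanSingleton ℤ A2 (tA (Jf p.1 p.2))) ∘ₗ
    (AddMonoidAlgebra.coeffLinearEquiv ℤ).toLinearMap

def epsA : A2 →ₐ[ZMod 2] ZMod 2 := (AddMonoidAlgebra.lift (ZMod 2) (ZMod 2) (ZMod 2)) 1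

def ev1 : LaurentPolynomial ℤ →ₗ[ℤ] ℤ := Finsupp.lsum ℤ (fun _ => LinearMap.id) ∘ₗ
  (AddMonoidAlgebra.coeffLinearEquiv ℤ).toLinearMap

def lder : LaurentPolynomial ℤ →ₗ[ℤ] LaurentPolynomial ℤ :=
  Finsupp.lsum ℤ (fun n : ℤ =>
    LinearMap.toSpanSingleton ℤ (LaurentPolynomial ℤ) ((n : ℤ) • LaurentPolynomial.T (n - 1))) ∘ₗ
    (AddMonoidAlgebra.coeffLinearEquiv ℤ).toLinearMap

def ev2 : R2 →ₗ[ℤ] ZMod 2 :=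
  Finsupp.lsum ℤ (fun _ : ℤ × ℤ => LinearMap.toSpanSingleton ℤ (ZMod 2) 1) ∘ₗ
    (AddMonoidAlgebra.coeffLinearEquiv ℤ).toLinearMap

/-! With `g m = s tᵐ - t`, the second difference `g (m + 2) - 2 g (m + 1) + g m` is the generator
`s tᵐ (1 - t)²`, so membership of every `g m` follows from `g 0 = (s + t) - (t + t)` and
`g 1 = (s t - s) + g 0`. -/

namespace AddSubgroup

variable {G : Type*} [AddCommGroup G] (H : AddSubgroup G)

theorem mem_of_forall_succ_sub_mem {f : ℤ → G} (h0 : f 0 ∈ H)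
    (hf : ∀ m, f (m + 1) - f m ∈ H) (m : ℤ) : f m ∈ H := by
  induction m with
  | zero => exact h0
  | succ i ih => simpa using H.add_mem (hf i) ih
  | pred i ih =>
    have h := hf (-i - 1)
    rw [sub_add_cancel] at h
    simpa using H.sub_mem ih h

theorem mem_of_forall_second_diff_mem {g : ℤ → G} (h0 : g 0 ∈ H) (h1 : g 1 ∈ H)
    (hg : ∀ m, g (m + 2) - 2 • g (m + 1) + g m ∈ H) (m : ℤ) : g m ∈ H := by
  have hdiff : ∀ m, g (m + 1) - g m ∈ H := by
    refine H.mem_of_forall_succ_sub_mem (by simpa using H.sub_mem h1 h0) fun m => ?_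
    convert hg m using 1
    rw [add_assoc, one_add_one_eq_two, two_nsmul]
    abel
  exact H.mem_of_forall_succ_sub_mem h0 hdiff m

end AddSubgroup

lemma mono_mul_mono (a b c d : ℤ) : mono a b * mono c d = mono (a + c) (b + d) := by
  simp [mono, AddMonoidAlgebra.single_mul_single]

lemma mono_mul_one_sub_sq (n m : ℤ) :
    mono n m * (1 - mono 0 1) ^ 2 = mono n (m + 2) - 2 • mono n (m + 1) + mono n m := by
  have h : mono n m * (1 - mono 0 1) ^ 2 =
      mono n m * (mono 0 1 * mono 0 1) - 2 • (mono n m * mono 0 1) + mono n m := by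
    rw [two_nsmul]; ring
  rw [h, mono_mul_mono, mono_mul_mono, mono_mul_mono]
  simp only [add_zero, one_add_one_eq_two]

lemma mono_diag_sub_mem_I (n : ℤ) : mono n n - mono n 0 ∈ I :=
  AddSubgroup.subset_closure (Or.inl (Or.inl (Or.inl ⟨n, rfl⟩)))

lemma mono_add_mono_neg_mem_I (n m : ℤ) : mono n m + mono (-n) (m - n) ∈ I :=
  AddSubgroup.subset_closure (Or.inl (Or.inl (Or.inr ⟨n, m, rfl⟩)))

lemma mono_add_mono_swap_mem_I (n m : ℤ) : mono n m + mono m n ∈ I :=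
  AddSubgroup.subset_closure (Or.inl (Or.inr ⟨n, m, rfl⟩))

lemma mono_mul_one_sub_sq_mem_I (n m : ℤ) : mono n m * (1 - mono 0 1) ^ 2 ∈ I :=
  AddSubgroup.subset_closure (Or.inr ⟨n, m, rfl⟩)

lemma mono_one_zero_sub_mem_I : mono 1 0 - mono 0 1 ∈ I := by
  rw [← add_sub_add_right_eq_sub _ _ (mono 0 1)]
  have two_t_mem : mono 0 1 + mono 0 1 ∈ I := by simpa using mono_add_mono_neg_mem_I 0 1
  exact I.sub_mem (mono_add_mono_swap_mem_I 1 0) two_t_mem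

theorem stmt4 : ∀ m : ℤ, mono 1 m - mono 0 1 ∈ I := by
  refine I.mem_of_forall_second_diff_mem mono_one_zero_sub_mem_I ?_ fun m => ?_
  · rw [← sub_add_sub_cancel _ (mono 1 0)]
    exact I.add_mem (mono_diag_sub_mem_I 1) mono_one_zero_sub_mem_I
  · convert mono_mul_one_sub_sq_mem_I 1 m using 1
    rw [mono_mul_one_sub_sq]
    abel
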